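/- Let A ∈ ℝ^{M×N} have full column rank with nonzero rows a_1, …, a_M, and let p_1, …, p_M be any probability distribution with p_i > 0 for all i. Define B ∈ ℝ^{M×N} as the matrix whose i‑th row is √p_i · a_i/‖a_i‖₂ (so ‖B‖_F = 1 and B has full column rank). Then for every e ∈ ℝ^N, the one‑step expected squared error of the randomized Kaczmarz iteration that selects row i with probability p_i satisfies ∑_{i=1}^{M} p_i ‖(I − P_i)e‖₂² ≤ (1 − κ(B)^{−2}) ‖e‖₂², where P_i is the orthogonal projection onto span(a_i) and κ(B) = ‖B‖_F ‖B^†‖₂. Hence randomized Kaczmarz with an arbitrary row‑selection distribution converges in expectation at the rate governed by the scaled condition number of a row‑rescaling B of A. -/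

import Mathlib

/-!
By Pythagoras, `‖e - P i e‖ ^ 2 = ‖e‖ ^ 2 - ⟪a i, e⟫ ^ 2 / ‖a i‖ ^ 2`. The rows of `B` are
`b i = (√(p i) / ‖a i‖) • a i`, so averaging over `p` gives
`‖e‖ ^ 2 - ∑ i, ⟪b i, e⟫ ^ 2 = ‖e‖ ^ 2 - ‖B e‖ ^ 2`, while `‖B‖_F ^ 2 = ∑ i, p i = 1`.
Finally `‖B e‖ ≥ σ ‖e‖` by the definition of the smallest singular value `σ`.
-/

open Matrix RealInnerProductSpace WithLp

section InnerProductSpace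

variable {E : Type*} [NormedAddCommGroup E] [InnerProductSpace ℝ E]

theorem norm_sub_inner_div_smul_sq (a e : E) :
    ‖e - (⟪a, e⟫ / ‖a‖ ^ 2) • a‖ ^ 2 = ‖e‖ ^ 2 - ⟪a, e⟫ ^ 2 / ‖a‖ ^ 2 := by
  rcases eq_or_ne a 0 with rfl | ha
  · simp
  rw [norm_sub_sq_real, real_inner_smul_right, norm_smul, mul_pow, Real.norm_eq_abs, sq_abs,
    real_inner_comm]
  field_simp
  ring

theorem sum_mul_norm_sub_inner_div_smul_sq {ι : Type*} (s : Finset ι) (p : ι → ℝ)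
    (hp : ∑ i ∈ s, p i = 1) (a : ι → E) (e : E) :
    ∑ i ∈ s, p i * ‖e - (⟪a i, e⟫ / ‖a i‖ ^ 2) • a i‖ ^ 2
      = ‖e‖ ^ 2 - ∑ i ∈ s, p i * (⟪a i, e⟫ ^ 2 / ‖a i‖ ^ 2) := by
  simp_rw [norm_sub_inner_div_smul_sq, mul_sub, Finset.sum_sub_distrib, ← Finset.sum_mul, hp,
    one_mul]

theorem inner_sqrt_div_norm_smul_sq {p : ℝ} (hp : 0 ≤ p) (a e : E) :
    ⟪(√p / ‖a‖) • a, e⟫ ^ 2 = p * (⟪a, e⟫ ^ 2 / ‖a‖ ^ 2) := by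
  rw [real_inner_smul_left, mul_pow, div_pow, Real.sq_sqrt hp]
  ring

theorem norm_sqrt_div_norm_smul_sq {p : ℝ} (hp : 0 ≤ p) {a : E} (ha : a ≠ 0) :
    ‖(√p / ‖a‖) • a‖ ^ 2 = p := by
  rw [norm_smul, mul_pow, Real.norm_eq_abs, sq_abs, div_pow, Real.sq_sqrt hp,
    div_mul_cancel₀ _ (pow_ne_zero 2 (norm_ne_zero_iff.2 ha))]

end InnerProductSpace

theorem sInf_norm_image_sphere_mul_norm_le {E F : Type*} [NormedAddCommGroup E] [NormedSpace ℝ E]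
    [SeminormedAddCommGroup F] [NormedSpace ℝ F] (f : E →ₗ[ℝ] F) (x : E) :
    sInf ((fun y => ‖f y‖) '' {y | ‖y‖ = 1}) * ‖x‖ ≤ ‖f x‖ := by
  rcases eq_or_ne x 0 with rfl | hx
  · simp
  have hbdd : BddBelow ((fun y => ‖f y‖) '' {y | ‖y‖ = 1}) :=
    ⟨0, by rintro _ ⟨y, -, rfl⟩; exact norm_nonneg _⟩
  have hle : _ ≤ ‖f (‖x‖⁻¹ • x)‖ := csInf_le hbdd ⟨‖x‖⁻¹ • x, norm_smul_inv_norm hx, rfl⟩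
  rw [map_smul, norm_smul, norm_inv, norm_norm, ← div_eq_inv_mul,
    le_div_iff₀ (norm_pos_iff.2 hx)] at hle
  exact hle

theorem Matrix.norm_toLp_mulVec_sq {m n : Type*} [Fintype m] [Fintype n] (B : Matrix m n ℝ)
    (x : EuclideanSpace ℝ n) :
    ‖toLp 2 (B *ᵥ ofLp x)‖ ^ 2 = ∑ i, ⟪toLp 2 (B i), x⟫ ^ 2 := by
  simp [EuclideanSpace.real_norm_sq_eq, PiLp.inner_apply, mulVec, dotProduct, mul_comm]

theorem Matrix.sum_sum_sq_eq_sum_norm_toLp_sq {m n : Type*} [Fintype m] [Fintype n]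
    (B : Matrix m n ℝ) : ∑ i, ∑ j, B i j ^ 2 = ∑ i, ‖toLp 2 (B i)‖ ^ 2 := by
  simp [EuclideanSpace.real_norm_sq_eq]

theorem randomized_kaczmarz_any_distribution_one_step_general
    {M N : ℕ}
    (A : Matrix (Fin M) (Fin N) ℝ)
    (hrows : ∀ i, A i ≠ 0)
    (p : Fin M → ℝ) (hp : ∀ i, 0 < p i) (hpsum : ∑ i, p i = 1)
    (B : Matrix (Fin M) (Fin N) ℝ)
    (hB : ∀ i j, B i j = Real.sqrt (p i) * (A i j / Real.sqrt (∑ c, A i c ^ 2)))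
    (σ : ℝ)
    (hσ : σ = sInf ((fun x : EuclideanSpace ℝ (Fin N) =>
      ‖(WithLp.equiv 2 (Fin M → ℝ)).symm (B.mulVec x)‖) '' {x | ‖x‖ = 1}))
    (P : Fin M → EuclideanSpace ℝ (Fin N) → EuclideanSpace ℝ (Fin N))
    (hP : ∀ (i : Fin M) (v : EuclideanSpace ℝ (Fin N)),
      P i v = ((∑ j, A i j * v j) / ∑ j, A i j ^ 2) • (WithLp.equiv 2 (Fin N → ℝ)).symm (A i))
    (e : EuclideanSpace ℝ (Fin N)) :
    ∑ i, p i * ‖e - P i e‖ ^ 2 ≤ (1 - σ ^ 2 / ∑ i, ∑ j, B i j ^ 2) * ‖e‖ ^ 2 := by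
  set a : Fin M → EuclideanSpace ℝ (Fin N) := fun i => toLp 2 (A i)
  have ha : ∀ i, a i ≠ 0 := fun i => by simpa [a] using hrows i
  have hPe : ∀ i, P i e = (⟪a i, e⟫ / ‖a i‖ ^ 2) • a i := by
    simp [hP, a, EuclideanSpace.real_norm_sq_eq, PiLp.inner_apply, mul_comm]
  have hrow : ∀ i, toLp 2 (B i) = (√(p i) / ‖a i‖) • a i := by
    intro i; ext j
    simp [hB, a, EuclideanSpace.norm_eq, div_mul_eq_mul_div, mul_div_assoc]
  have hFrob : ∑ i, ∑ j, B i j ^ 2 = 1 := by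
    simp_rw [sum_sum_sq_eq_sum_norm_toLp_sq, hrow,
      norm_sqrt_div_norm_smul_sq (hp _).le (ha _), hpsum]
  have hBe : ‖toLp 2 (B *ᵥ ofLp e)‖ ^ 2 = ∑ i, p i * (⟪a i, e⟫ ^ 2 / ‖a i‖ ^ 2) := by
    simp_rw [norm_toLp_mulVec_sq, hrow, inner_sqrt_div_norm_smul_sq (hp _).le]
  have hσe : σ * ‖e‖ ≤ ‖toLp 2 (B *ᵥ ofLp e)‖ :=
    hσ ▸ sInf_norm_image_sphere_mul_norm_le (toEuclideanLin B) e
  have hσ0 : 0 ≤ σ := hσ ▸ Real.sInf_nonneg (by rintro _ ⟨x, -, rfl⟩; exact norm_nonneg _)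
  simp_rw [hPe, sum_mul_norm_sub_inner_div_smul_sq _ p hpsum, hFrob, div_one, ← hBe]
  nlinarith [mul_nonneg hσ0 (norm_nonneg e)]

/-- Let `A : ℝ^{M×N}` have full column rank with nonzero rows, and let
`p` be any probability distribution on the rows with `p i > 0` for all `i`. Let
`B : ℝ^{M×N}` have `i`-th row `√(p i) · a_i / ‖a_i‖`, and let `σ` be the smallest singular
value of `B`. Then for every `e ∈ ℝ^N`, the one-step expected squared error of the
randomized Kaczmarz iteration selecting row `i` with probability `p i` satisfies
`∑ i, p i ‖(I − P_i) e‖² ≤ (1 − κ(B)⁻²) ‖e‖² = (1 − σ² / ‖B‖_F²) ‖e‖²`,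
where `P_i` is the orthogonal projection onto `span (a_i)`. -/
theorem randomized_kaczmarz_any_distribution_one_step
    {M N : ℕ}
    (A : Matrix (Fin M) (Fin N) ℝ) (hrank : A.rank = N)
    (hrows : ∀ i, A i ≠ 0)
    (p : Fin M → ℝ) (hp : ∀ i, 0 < p i) (hpsum : ∑ i, p i = 1)
    (B : Matrix (Fin M) (Fin N) ℝ)
    (hB : ∀ i j, B i j = Real.sqrt (p i) * (A i j / Real.sqrt (∑ c, A i c ^ 2)))
    (σ : ℝ)
    (hσ : σ = sInf ((fun x : EuclideanSpace ℝ (Fin N) =>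
      ‖(WithLp.equiv 2 (Fin M → ℝ)).symm (B.mulVec x)‖) '' {x | ‖x‖ = 1}))
    (P : Fin M → EuclideanSpace ℝ (Fin N) → EuclideanSpace ℝ (Fin N))
    (hP : ∀ (i : Fin M) (v : EuclideanSpace ℝ (Fin N)),
      P i v = ((∑ j, A i j * v j) / ∑ j, A i j ^ 2) • (WithLp.equiv 2 (Fin N → ℝ)).symm (A i))
    (e : EuclideanSpace ℝ (Fin N)) :
    ∑ i, p i * ‖e - P i e‖ ^ 2 ≤ (1 - σ ^ 2 / ∑ i, ∑ j, B i j ^ 2) * ‖e‖ ^ 2 :=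
  randomized_kaczmarz_any_distribution_one_step_general A hrows p hp hpsum B hB σ hσ P hP e
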